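/- Let f : ℂ → ℂ^N be holomorphic and nowhere vanishing, and set P₀ = P(f). Then at every point of ℂ, tr(∂P₀ · ∂̄P₀) = |P₊f|²/|f|²; i.e. the conformal factor g₊₋ of the metric induced by the surface built from the holomorphic map equals |P₊f|²/|f|². -/

import Mathlib

open Complex Matrix

/-- Wirtinger derivative ∂ = (∂/∂ζ₁ − i ∂/∂ζ₂)/2 of a map ℂ → ℂ. -/
noncomputable def wD (f : ℂ → ℂ) (z : ℂ) : ℂ :=
  (fderiv ℝ f z 1 - Complex.I * fderiv ℝ f z Complex.I) / 2

/-- Anti-Wirtinger derivative ∂̄ = (∂/∂ζ₁ + i ∂/∂ζ₂)/2 of a map ℂ → ℂ. -/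
noncomputable def wDbar (f : ℂ → ℂ) (z : ℂ) : ℂ :=
  (fderiv ℝ f z 1 + Complex.I * fderiv ℝ f z Complex.I) / 2

/-- Componentwise Wirtinger derivative for vector-valued maps. -/
noncomputable def wDV {N : ℕ} (f : ℂ → Fin N → ℂ) (z : ℂ) : Fin N → ℂ :=
  fun i => wD (fun w => f w i) z

/-- Componentwise anti-Wirtinger derivative for vector-valued maps. -/
noncomputable def wDbarV {N : ℕ} (f : ℂ → Fin N → ℂ) (z : ℂ) : Fin N → ℂ :=
  fun i => wDbar (fun w => f w i) z

/-- Hermitian inner product a†·b = Σᵢ āᵢ bᵢ on ℂ^N. -/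
noncomputable def herm {N : ℕ} (a b : Fin N → ℂ) : ℂ :=
  ∑ i, (starRingEnd ℂ) (a i) * b i

/-- Squared norm |a|² as a real number. -/
noncomputable def nsq {N : ℕ} (a : Fin N → ℂ) : ℝ :=
  ∑ i, Complex.normSq (a i)

/-- The operator P₊ g = ∂g − g (g†·∂g)/|g|². -/
noncomputable def Pp {N : ℕ} (g : ℂ → Fin N → ℂ) : ℂ → Fin N → ℂ :=
  fun z i => wDV g z i - g z i * (herm (g z) (wDV g z) / herm (g z) (g z))

/-- Iterates of P₊ : P₊⁰ g = g, P₊^{k+1} g = P₊ (P₊^k g). -/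
noncomputable def PpIter {N : ℕ} (g : ℂ → Fin N → ℂ) : ℕ → (ℂ → Fin N → ℂ)
  | 0 => g
  | k + 1 => Pp (PpIter g k)

/-- The projector P(V) = V ⊗ V† / |V|². -/
noncomputable def proj {N : ℕ} (V : ℂ → Fin N → ℂ) (z : ℂ) : Matrix (Fin N) (Fin N) ℂ :=
  fun i j => V z i * (starRingEnd ℂ) (V z j) / herm (V z) (V z)

/-- Entrywise Wirtinger derivative for matrix-valued maps. -/
noncomputable def wDM {N : ℕ} (M : ℂ → Matrix (Fin N) (Fin N) ℂ) (z : ℂ) :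
    Matrix (Fin N) (Fin N) ℂ :=
  fun i j => wD (fun w => M w i j) z

/-- Entrywise anti-Wirtinger derivative for matrix-valued maps. -/
noncomputable def wDbarM {N : ℕ} (M : ℂ → Matrix (Fin N) (Fin N) ℂ) (z : ℂ) :
    Matrix (Fin N) (Fin N) ℂ :=
  fun i j => wDbar (fun w => M w i j) z

lemma fderiv_real_holo {g : ℂ → ℂ} (hg : Differentiable ℂ g) (z w : ℂ) :
    fderiv ℝ g z w = w * deriv g z := by
  have h1 := (hg z).fderiv_restrictScalars ℝ
  have h2 : fderiv ℂ g z w = w • fderiv ℂ g z 1 := by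
    rw [← (fderiv ℂ g z).map_smul w 1]; simp
  rw [h1, ContinuousLinearMap.coe_restrictScalars', h2, fderiv_apply_one_eq_deriv, smul_eq_mul]

lemma wD_holo {g : ℂ → ℂ} (hg : Differentiable ℂ g) (z : ℂ) :
    wD g z = deriv g z := by
  simp only [wD, fderiv_real_holo hg]
  have h : (I : ℂ) * I = -1 := Complex.I_mul_I
  field_simp
  linear_combination (-(deriv g z)) * h

lemma wDbar_holo {g : ℂ → ℂ} (hg : Differentiable ℂ g) (z : ℂ) :
    wDbar g z = 0 := by
  simp only [wDbar, fderiv_real_holo hg]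
  have h : (I : ℂ) * I = -1 := Complex.I_mul_I
  field_simp
  linear_combination (deriv g z) * h

lemma fderiv_conj_apply {g : ℂ → ℂ} {z : ℂ} (hg : DifferentiableAt ℝ g z) (w : ℂ) :
    fderiv ℝ (fun x => (starRingEnd ℂ) (g x)) z w = (starRingEnd ℂ) (fderiv ℝ g z w) := by
  have h := ((Complex.conjCLE : ℂ ≃L[ℝ] ℂ).toContinuousLinearMap.hasFDerivAt.comp z
    hg.hasFDerivAt).fderiv
  simp only [Function.comp_def] at h
  have he : (fun x => (starRingEnd ℂ) (g x)) =
      fun x => (Complex.conjCLE : ℂ ≃L[ℝ] ℂ).toContinuousLinearMap (g x) := by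
    funext x; simp
  rw [he, h]
  simp

lemma wD_conj {g : ℂ → ℂ} {z : ℂ} (hg : DifferentiableAt ℝ g z) :
    wD (fun x => (starRingEnd ℂ) (g x)) z = (starRingEnd ℂ) (wDbar g z) := by
  simp only [wD, wDbar, fderiv_conj_apply hg, map_div₀, map_add, _root_.map_mul, conj_I, map_ofNat]
  ring

lemma wDbar_conj {g : ℂ → ℂ} {z : ℂ} (hg : DifferentiableAt ℝ g z) :
    wDbar (fun x => (starRingEnd ℂ) (g x)) z = (starRingEnd ℂ) (wD g z) := by
  simp only [wD, wDbar, fderiv_conj_apply hg, map_div₀, map_sub, _root_.map_mul, conj_I, map_ofNat]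
  ring

lemma wD_mul {u v : ℂ → ℂ} {z : ℂ} (hu : DifferentiableAt ℝ u z) (hv : DifferentiableAt ℝ v z) :
    wD (fun w => u w * v w) z = wD u z * v z + u z * wD v z := by
  simp only [wD, fderiv_fun_mul hu hv, ContinuousLinearMap.add_apply, ContinuousLinearMap.smul_apply,
    smul_eq_mul]
  ring

lemma wDbar_mul {u v : ℂ → ℂ} {z : ℂ} (hu : DifferentiableAt ℝ u z) (hv : DifferentiableAt ℝ v z) :
    wDbar (fun w => u w * v w) z = wDbar u z * v z + u z * wDbar v z := by
  simp only [wDbar, fderiv_fun_mul hu hv, ContinuousLinearMap.add_apply, ContinuousLinearMap.smul_apply,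
    smul_eq_mul]
  ring

lemma fderiv_inv_comp {v : ℂ → ℂ} {z : ℂ} (hv : DifferentiableAt ℝ v z) (h0 : v z ≠ 0) (w : ℂ) :
    fderiv ℝ (fun w => (v w)⁻¹) z w = -((v z)⁻¹ * fderiv ℝ v z w * (v z)⁻¹) := by
  have h : fderiv ℝ (Inv.inv ∘ v) z = (fderiv ℝ Inv.inv (v z)).comp (fderiv ℝ v z) :=
    fderiv_comp z (differentiableAt_inv h0) hv
  simp only [Function.comp_def] at h
  rw [h, fderiv_inv' h0]
  simp [ContinuousLinearMap.mulLeftRight_apply]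

lemma wD_inv {v : ℂ → ℂ} {z : ℂ} (hv : DifferentiableAt ℝ v z) (h0 : v z ≠ 0) :
    wD (fun w => (v w)⁻¹) z = -(wD v z) / v z ^ 2 := by
  simp only [wD, fderiv_inv_comp hv h0]
  field_simp
  ring

lemma wDbar_inv {v : ℂ → ℂ} {z : ℂ} (hv : DifferentiableAt ℝ v z) (h0 : v z ≠ 0) :
    wDbar (fun w => (v w)⁻¹) z = -(wDbar v z) / v z ^ 2 := by
  simp only [wDbar, fderiv_inv_comp hv h0]
  field_simp
  ring

lemma wD_sum {ι : Type*} {z : ℂ} (s : Finset ι) (F : ι → ℂ → ℂ)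
    (hF : ∀ i ∈ s, DifferentiableAt ℝ (F i) z) :
    wD (fun w => ∑ i ∈ s, F i w) z = ∑ i ∈ s, wD (F i) z := by
  simp only [wD, fderiv_fun_sum hF, ContinuousLinearMap.sum_apply]
  rw [Finset.mul_sum, ← Finset.sum_sub_distrib, Finset.sum_div]

lemma wDbar_sum {ι : Type*} {z : ℂ} (s : Finset ι) (F : ι → ℂ → ℂ)
    (hF : ∀ i ∈ s, DifferentiableAt ℝ (F i) z) :
    wDbar (fun w => ∑ i ∈ s, F i w) z = ∑ i ∈ s, wDbar (F i) z := by
  simp only [wDbar, fderiv_fun_sum hF, ContinuousLinearMap.sum_apply]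
  rw [Finset.mul_sum, ← Finset.sum_add_distrib, Finset.sum_div]


/-- For `P₀ = P(f)` with `f` holomorphic and nowhere vanishing,
`tr(∂P₀ · ∂̄P₀) = |P₊f|²/|f|²`. -/
theorem stmt_4 {N : ℕ} (f : ℂ → Fin N → ℂ)
    (hf : ∀ i, Differentiable ℂ fun z => f z i)
    (hf0 : ∀ z, f z ≠ 0) :
    ∀ ζ : ℂ,
      Matrix.trace (wDM (proj f) ζ * wDbarM (proj f) ζ) =
        ((nsq (Pp f ζ) / nsq (f ζ) : ℝ) : ℂ) := by
  intro ζ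
  -- abbreviations
  set a : Fin N → ℂ := f ζ with ha
  set d : Fin N → ℂ := fun i => deriv (fun w => f w i) ζ with hd
  set S : ℂ → ℂ := fun w => herm (f w) (f w) with hS
  set Sv : ℂ := herm a a with hSv
  set A : ℂ := herm a d with hA
  set u : Fin N → ℂ := fun i => d i - a i * (A / Sv) with hu
  -- differentiability facts
  have hdR : ∀ i, Differentiable ℝ (fun w => f w i) := fun i => (hf i).restrictScalars ℝ
  have hdC : ∀ j, Differentiable ℝ (fun w => (starRingEnd ℂ) (f w j)) := by
    intro j
    exact Complex.conjCLE.differentiable.comp (hdR j)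
  have hSsum : S = fun w => ∑ k, (starRingEnd ℂ) (f w k) * f w k := by
    funext w; simp [hS, herm]
  have hdS : Differentiable ℝ S := by
    rw [hSsum]
    exact Differentiable.fun_sum fun k _ => (hdC k).fun_mul (hdR k)
  -- nonvanishing of the norm
  have hnsq_pos : ∀ z : ℂ, 0 < nsq (f z) := by
    intro z
    have hz := hf0 z
    obtain ⟨k, hk⟩ : ∃ k, f z k ≠ 0 := by
      by_contra h
      push_neg at h
      exact hz (funext h)
    have : 0 < Complex.normSq (f z k) := Complex.normSq_pos.2 hk
    exact Finset.sum_pos' (fun i _ => Complex.normSq_nonneg _) ⟨k, Finset.mem_univ k, this⟩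
  have hherm_self : ∀ v : Fin N → ℂ, herm v v = ((nsq v : ℝ) : ℂ) := by
    intro v
    simp only [herm, nsq]
    push_cast
    exact Finset.sum_congr rfl fun i _ => (Complex.normSq_eq_conj_mul_self).symm
  have hSv0 : Sv ≠ 0 := by
    rw [hSv, hherm_self]
    exact_mod_cast (hnsq_pos ζ).ne'
  have hSz : ∀ z, S z ≠ 0 := by
    intro z
    rw [hS]
    show herm (f z) (f z) ≠ 0
    rw [hherm_self]
    exact_mod_cast (hnsq_pos z).ne'
  -- basic Wirtinger derivatives
  have hwDf : ∀ i, wD (fun w => f w i) ζ = d i := fun i => wD_holo (hf i) ζ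
  have hwDbarf : ∀ i, wDbar (fun w => f w i) ζ = 0 := fun i => wDbar_holo (hf i) ζ
  have hwDc : ∀ j, wD (fun w => (starRingEnd ℂ) (f w j)) ζ = 0 := by
    intro j; rw [wD_conj ((hdR j) ζ), hwDbarf]; simp
  have hwDbarc : ∀ j, wDbar (fun w => (starRingEnd ℂ) (f w j)) ζ = (starRingEnd ℂ) (d j) := by
    intro j; rw [wDbar_conj ((hdR j) ζ), hwDf]
  -- derivatives of S
  have hwDS : wD S ζ = A := by
    rw [hSsum, wD_sum _ _ (fun k _ => ((hdC k).fun_mul (hdR k)) ζ)]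
    rw [hA, herm]
    refine Finset.sum_congr rfl fun k _ => ?_
    rw [wD_mul ((hdC k) ζ) ((hdR k) ζ), hwDc, hwDf]
    simp [ha]
  have hwDbarS : wDbar S ζ = (starRingEnd ℂ) A := by
    rw [hSsum, wDbar_sum _ _ (fun k _ => ((hdC k).fun_mul (hdR k)) ζ)]
    rw [hA, herm, map_sum]
    refine Finset.sum_congr rfl fun k _ => ?_
    rw [wDbar_mul ((hdC k) ζ) ((hdR k) ζ), hwDbarc, hwDbarf]
    simp [mul_comm, ha]
  -- entries of the matrix derivatives
  have hentry : ∀ i j, (fun w => proj f w i j)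
      = fun w => (f w i * (starRingEnd ℂ) (f w j)) * (S w)⁻¹ := by
    intro i j; funext w; simp [proj, hS, div_eq_mul_inv]
  have hprodD : ∀ i j, DifferentiableAt ℝ (fun w => f w i * (starRingEnd ℂ) (f w j)) ζ :=
    fun i j => ((hdR i).mul (hdC j)) ζ
  have hwDprod : ∀ i j, wD (fun w => f w i * (starRingEnd ℂ) (f w j)) ζ
      = d i * (starRingEnd ℂ) (a j) := by
    intro i j
    rw [wD_mul ((hdR i) ζ) ((hdC j) ζ), hwDf, hwDc]
    simp [ha]
  have hwDbarprod : ∀ i j, wDbar (fun w => f w i * (starRingEnd ℂ) (f w j)) ζ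
      = a i * (starRingEnd ℂ) (d j) := by
    intro i j
    rw [wDbar_mul ((hdR i) ζ) ((hdC j) ζ), hwDbarf, hwDbarc]
    simp [ha]
  have hM : ∀ i j, wDM (proj f) ζ i j = (starRingEnd ℂ) (a j) * u i / Sv := by
    intro i j
    show wD (fun w => proj f w i j) ζ = _
    rw [hentry i j, wD_mul (hprodD i j) (((hdS ζ).fun_inv (hSz ζ))),
      wD_inv (hdS ζ) (hSz ζ), hwDprod, hwDS]
    have hSζ : S ζ = Sv := by rw [hS, hSv, ha]
    rw [hSζ]
    rw [hu]
    field_simp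
    ring
  have hMbar : ∀ i j, wDbarM (proj f) ζ i j = a i * (starRingEnd ℂ) (u j) / Sv := by
    intro i j
    show wDbar (fun w => proj f w i j) ζ = _
    rw [hentry i j, wDbar_mul (hprodD i j) (((hdS ζ).fun_inv (hSz ζ))),
      wDbar_inv (hdS ζ) (hSz ζ), hwDbarprod, hwDbarS]
    have hSζ : S ζ = Sv := by rw [hS, hSv, ha]
    rw [hSζ, hu]
    simp only [map_sub, _root_.map_mul, map_div₀]
    have hSvr : (starRingEnd ℂ) Sv = Sv := by
      rw [hSv, hherm_self]
      exact Complex.conj_ofReal _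
    rw [hSvr]
    simp only [← ha]
    field_simp
    ring
  -- the right-hand side
  have hPp : Pp f ζ = u := by
    funext i
    have hwDV : wDV f ζ = d := by funext k; exact hwDf k
    simp only [Pp, hwDV, hu, ha, hA, hSv]
  have hRHS : ((nsq (Pp f ζ) / nsq (f ζ) : ℝ) : ℂ)
      = (∑ i, (starRingEnd ℂ) (u i) * u i) / Sv := by
    rw [hPp]
    push_cast
    rw [← hherm_self, ← hherm_self, herm]
  rw [hRHS]
  -- compute the trace
  have htr : Matrix.trace (wDM (proj f) ζ * wDbarM (proj f) ζ)
      = ∑ i, ∑ j, wDM (proj f) ζ i j * wDbarM (proj f) ζ j i := by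
    simp [Matrix.trace, Matrix.mul_apply, Matrix.diag]
  rw [htr]
  have hsummand : ∀ i j, wDM (proj f) ζ i j * wDbarM (proj f) ζ j i
      = ((starRingEnd ℂ) (u i) * u i) * ((starRingEnd ℂ) (a j) * a j) / Sv ^ 2 := by
    intro i j
    rw [hM i j, hMbar j i]
    field_simp
  calc (∑ i, ∑ j, wDM (proj f) ζ i j * wDbarM (proj f) ζ j i)
      = ∑ i, ∑ j, ((starRingEnd ℂ) (u i) * u i) * ((starRingEnd ℂ) (a j) * a j) / Sv ^ 2 :=
        Finset.sum_congr rfl fun i _ => Finset.sum_congr rfl fun j _ => hsummand i j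
    _ = (∑ i, (starRingEnd ℂ) (u i) * u i) * (∑ j, (starRingEnd ℂ) (a j) * a j) / Sv ^ 2 := by
        rw [Finset.sum_mul_sum]
        simp [Finset.sum_div]
    _ = (∑ i, (starRingEnd ℂ) (u i) * u i) * Sv / Sv ^ 2 := by
        rw [hSv, herm]
    _ = (∑ i, (starRingEnd ℂ) (u i) * u i) / Sv := by
        field_simp
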